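/- arXiv:2405.05268 — 2 statements merged into one kernel-verified Lean document; each statement's English description precedes it below -/
import Mathlib

section
/- For every integer k ≥ 1 and every positive integer n, S_{2k-1}(n) = Σ_{m=1}^{k} R(k,m) · (1/m) · C(n+m, 2m), as an identity of rational numbers. -/
/-- `S k n = 1^k + 2^k + ⋯ + n^k`, the sum of the `k`-th powers of the first `n`
positive integers. -/
def S (k n : ℕ) : ℕ := ∑ i ∈ Finset.Icc 1 n, i ^ k

/-- `R k m = ∑_{j=0}^m (-1)^j C(2m, j) (m-j)^{2k}`, the sequence A304330. -/
def R (k m : ℕ) : ℤ :=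
  ∑ j ∈ Finset.range (m + 1),
    (-1 : ℤ) ^ j * ((2 * m).choose j : ℤ) * (((m - j) ^ (2 * k) : ℕ) : ℤ)

/-!
Multiplying by `i ^ 2` turns `C(i+m, 2m+1)` into a combination of `C(i+m+1, 2m+3)` and
`C(i+m, 2m+1)`. Matched against the central-factorial recurrence
`R(k+1, m+1) = 2(m+1)(2m+1) R(k, m) + (m+1)^2 R(k, m+1)`, and using that `R(k, m)` vanishes for
`m > k` (it is a `2m`-th difference of a polynomial of degree `2k`), this gives by induction on `k`
the pointwise expansion `i^(2k-1) = ∑ₘ R(k, m) / m · C(i+m-1, 2m-1)`. Summing over `i` with the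
hockey-stick identity yields the formula for `S_{2k-1}(n)`.
-/

open Finset fwdDiff

theorem sum_range_two_mul_add_one_of_symm {M : Type*} [AddCommMonoid M] (f : ℕ → M) (m : ℕ)
    (hf : ∀ j ≤ 2 * m, f (2 * m - j) = f j) :
    ∑ j ∈ range (2 * m + 1), f j = ∑ j ∈ range (m + 1), f j + ∑ j ∈ range m, f j := by
  rw [show 2 * m + 1 = (m + 1) + m by ring, sum_range_add, ← sum_range_reflect f m]
  congr 1
  refine sum_congr rfl fun j hj => ?_
  have hjm := mem_range.1 hj
  rw [← hf (m + 1 + j) (by omega)]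
  congr 1
  omega

theorem Nat.add_two_choose_succ_mul_mul_sub (n j : ℕ) :
    (n + 2).choose (j + 1) * (j + 1) * (n + 1 - j) = (n + 2) * (n + 1) * n.choose j := by
  rw [← Nat.add_one_mul_choose_eq, mul_assoc, ← Nat.choose_mul_succ_eq]
  ring

theorem Nat.sq_mul_add_choose (i m : ℕ) :
    i ^ 2 * (i + m).choose (2 * m + 1) =
      (2 * m + 2) * (2 * m + 3) * (i + m + 1).choose (2 * m + 3) +
        (m + 1) ^ 2 * (i + m).choose (2 * m + 1) := by
  rcases le_or_gt i m with h | h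
  · simp [Nat.choose_eq_zero_of_lt (by omega : i + m < 2 * m + 1),
      Nat.choose_eq_zero_of_lt (by omega : i + m + 1 < 2 * m + 3)]
  obtain ⟨t, rfl⟩ := Nat.exists_eq_add_of_lt h
  have h1 : (t + 2 * m + 2) * (t + 2 * m + 1).choose (2 * m + 2) =
      (t + 2 * m + 2).choose (2 * m + 3) * (2 * m + 3) :=
    Nat.add_one_mul_choose_eq _ _
  have h2 : (t + 2 * m + 1).choose (2 * m + 2) * (2 * m + 2) =
      (t + 2 * m + 1).choose (2 * m + 1) * t := by
    rw [Nat.choose_succ_right_eq, show t + 2 * m + 1 - (2 * m + 1) = t by omega]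
  rw [show m + t + 1 + m = t + 2 * m + 1 by ring]
  zify at h1 h2 ⊢
  linear_combination (2 * m + 2) * h1 - (t + 2 * m + 2) * h2

theorem sum_Icc_add_choose (m n : ℕ) :
    ∑ i ∈ Icc 1 n, (i + m).choose (2 * m + 1) = (n + m + 1).choose (2 * m + 2) := by
  induction n with
  | zero => simp [Nat.choose_eq_zero_of_lt (by omega : m + 1 < 2 * m + 2)]
  | succ n ih =>
    rw [sum_Icc_succ_top (by omega), ih, add_right_comm n 1 m, Nat.choose_succ_succ' (n + m + 1),
      add_comm]

theorem R_eq_sum (k m : ℕ) :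
    R k m =
      ∑ j ∈ range (m + 1), (-1) ^ j * ((2 * m).choose j : ℤ) * ((m : ℤ) - j) ^ (2 * k) := by
  refine sum_congr rfl fun j hj => ?_
  rw [Nat.cast_pow, Nat.cast_sub (by simpa [Nat.lt_succ_iff] using hj)]

theorem R_zero_right {k : ℕ} (hk : k ≠ 0) : R k 0 = 0 := by
  simp [R, hk]

-- The `2m`-th central difference of `x ↦ x ^ (2k)` at `0`, as a forward difference from `-m`.
theorem sum_range_alternating_choose_mul_pow_eq_zero {k m : ℕ} (h : k < m) :
    ∑ j ∈ range (2 * m + 1), (-1) ^ j * ((2 * m).choose j : ℤ) * ((m : ℤ) - j) ^ (2 * k) =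
      0 := by
  have hdiff : (Δ_[1])^[2 * m] (fun r : ℤ ↦ (r + -m) ^ (2 * k)) 0 = 0 := by
    rw [fwdDiff_iter_comp_add (f := fun r : ℤ ↦ r ^ (2 * k)),
      fwdDiff_iter_pow_eq_zero_of_lt (by omega), Pi.zero_apply]
  rw [fwdDiff_iter_eq_sum_shift] at hdiff
  rw [← hdiff]
  refine sum_congr rfl fun j hj => ?_
  have hj : j ≤ 2 * m := Nat.lt_succ_iff.1 (mem_range.1 hj)
  rw [smul_eq_mul, neg_one_pow_congr (m := 2 * m - j) (n := j) (by simp [Nat.even_sub hj]),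
    zero_add, nsmul_one, ← sub_eq_add_neg, ← neg_sub, Even.neg_pow ⟨k, two_mul k⟩]

-- The terms of the central difference are symmetric under `j ↦ 2m - j` and the middle one
-- vanishes, so it equals `2 * R k m`.
theorem R_eq_zero_of_lt {k m : ℕ} (hk : k ≠ 0) (h : k < m) : R k m = 0 := by
  set f : ℕ → ℤ := fun j ↦ (-1) ^ j * ((2 * m).choose j : ℤ) * ((m : ℤ) - j) ^ (2 * k)
  have hsum : ∑ j ∈ range (2 * m + 1), f j = 0 := sum_range_alternating_choose_mul_pow_eq_zero h
  have hmid : f m = 0 := by simp [f, hk]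
  rw [sum_range_two_mul_add_one_of_symm, sum_range_succ, hmid, add_zero, ← two_mul] at hsum
  · rw [R_eq_sum]
    change ∑ j ∈ range (m + 1), f j = 0
    rw [sum_range_succ, hmid, add_zero]
    simpa using hsum
  · intro j hj
    simp only [f]
    have hreflect : (m : ℤ) - (2 * m - j : ℕ) = -((m : ℤ) - j) := by
      push_cast [Nat.cast_sub hj]
      ring
    rw [Nat.choose_symm hj,
      neg_one_pow_congr (m := 2 * m - j) (n := j) (by simp [Nat.even_sub hj]), hreflect,
      Even.neg_pow ⟨k, two_mul k⟩]

-- Split `(m + 1 - j) ^ 2 = (m + 1) ^ 2 - j (2m + 2 - j)`; the weight `j (2m + 2 - j)` turns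
-- `C(2m + 2, j)` into `(2m + 2)(2m + 1) C(2m, j - 1)`.
theorem R_succ_succ (k m : ℕ) :
    R (k + 1) (m + 1) = 2 * (m + 1) * (2 * m + 1) * R k m + (m + 1) ^ 2 * R k (m + 1) := by
  have hweight : ∑ j ∈ range (m + 2), (-1) ^ j * ((2 * m + 2).choose j : ℤ)
      * (j * (2 * m + 2 - j)) * ((m + 1 : ℤ) - j) ^ (2 * k) =
      -(2 * (m + 1) * (2 * m + 1) * R k m) := by
    rw [sum_range_succ', R_eq_sum, mul_sum, ← sum_neg_distrib]
    simp only [Nat.cast_zero, zero_mul, mul_zero, add_zero]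
    refine sum_congr rfl fun j hj => ?_
    have hchoose :=
      congrArg (Nat.cast : ℕ → ℤ) (Nat.add_two_choose_succ_mul_mul_sub (2 * m) j)
    push_cast [Nat.cast_sub (by simp at hj; omega : j ≤ 2 * m + 1)] at hchoose
    push_cast
    linear_combination (-(-1) ^ j * ((m : ℤ) - j) ^ (2 * k)) * hchoose
  calc R (k + 1) (m + 1)
      = ∑ j ∈ range (m + 2), ((m + 1) ^ 2 * ((-1) ^ j * ((2 * m + 2).choose j : ℤ)
          * ((m + 1 : ℤ) - j) ^ (2 * k)) - (-1) ^ j * ((2 * m + 2).choose j : ℤ)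
          * (j * (2 * m + 2 - j)) * ((m + 1 : ℤ) - j) ^ (2 * k)) := by
        rw [R_eq_sum]
        refine sum_congr rfl fun j _ => ?_
        rw [show 2 * (m + 1) = 2 * m + 2 by ring]
        push_cast
        ring
    _ = 2 * (m + 1) * (2 * m + 1) * R k m + (m + 1) ^ 2 * R k (m + 1) := by
        rw [sum_sub_distrib, ← mul_sum, hweight, R_eq_sum k (m + 1),
          show 2 * (m + 1) = 2 * m + 2 by ring]
        push_cast
        ring

theorem pow_two_mul_add_one_eq_sum (k i : ℕ) :
    (i : ℚ) ^ (2 * k + 1) = ∑ m ∈ range (k + 1),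
      (R (k + 1) (m + 1) : ℚ) / (m + 1) * ((i + m).choose (2 * m + 1) : ℚ) := by
  set B : ℕ → ℚ := fun m ↦ ((i + m).choose (2 * m + 1) : ℚ)
  induction k with
  | zero => simp [R, sum_range_succ]
  | succ k ih =>
    have hB (m : ℕ) : (i : ℚ) ^ 2 * B m =
        (2 * m + 2) * (2 * m + 3) * B (m + 1) + (m + 1) ^ 2 * B m := by
      simp only [B, ← add_assoc]
      exact_mod_cast Nat.sq_mul_add_choose i m
    calc (i : ℚ) ^ (2 * (k + 1) + 1) = (i : ℚ) ^ 2 * (i : ℚ) ^ (2 * k + 1) := by ring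
      _ = ∑ m ∈ range (k + 1), (2 * (2 * m + 3) * R (k + 1) (m + 1) * B (m + 1)
            + (m + 1) * R (k + 1) (m + 1) * B m) := by
          rw [ih, mul_sum]
          refine sum_congr rfl fun m _ => ?_
          rw [← mul_assoc, mul_comm ((i : ℚ) ^ 2), mul_assoc, hB]
          field_simp
      _ = ∑ m ∈ range (k + 1 + 1), 2 * (2 * m + 1) * R (k + 1) m * B m
            + ∑ m ∈ range (k + 1 + 1), (m + 1) * R (k + 1) (m + 1) * B m := by
          rw [sum_add_distrib, sum_range_succ' _ (k + 1), sum_range_succ _ (k + 1),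
            R_zero_right k.succ_ne_zero, R_eq_zero_of_lt k.succ_ne_zero (by omega)]
          simp only [Int.cast_zero, mul_zero, zero_mul, add_zero]
          congr 1
          refine sum_congr rfl fun m _ => ?_
          push_cast
          ring
      _ = ∑ m ∈ range (k + 1 + 1), (R (k + 1 + 1) (m + 1) : ℚ) / (m + 1) * B m := by
          rw [← sum_add_distrib]
          refine sum_congr rfl fun m _ => ?_
          rw [R_succ_succ (k + 1) m]
          push_cast
          field_simp

theorem stmt_3_general (k n : ℕ) (hk : 1 ≤ k) :
    (S (2 * k - 1) n : ℚ) =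
      ∑ m ∈ Finset.Icc 1 k,
        (R k m : ℚ) * (1 / (m : ℚ)) * ((n + m).choose (2 * m) : ℚ) := by
  obtain ⟨k, rfl⟩ := Nat.exists_eq_add_of_le' hk
  rw [show 2 * (k + 1) - 1 = 2 * k + 1 by omega, ← Ico_add_one_right_eq_Icc, sum_Ico_eq_sum_range]
  calc (S (2 * k + 1) n : ℚ)
      = ∑ i ∈ Icc 1 n, ∑ m ∈ range (k + 1),
          (R (k + 1) (m + 1) : ℚ) / (m + 1) * ((i + m).choose (2 * m + 1) : ℚ) := by
        simp only [S, Nat.cast_sum, Nat.cast_pow, pow_two_mul_add_one_eq_sum]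
    _ = ∑ m ∈ range (k + 1),
          (R (k + 1) (m + 1) : ℚ) / (m + 1) * ((n + m + 1).choose (2 * m + 2) : ℚ) := by
        rw [sum_comm]
        simp only [← mul_sum, ← Nat.cast_sum, sum_Icc_add_choose]
    _ = _ := by
        refine sum_congr (by simp) fun m _ => ?_
        push_cast
        ring_nf

theorem stmt_3 (k n : ℕ) (hk : 1 ≤ k) (hn : 1 ≤ n) :
    (S (2 * k - 1) n : ℚ) =
      ∑ m ∈ Finset.Icc 1 k,
        (R k m : ℚ) * (1 / (m : ℚ)) * ((n + m).choose (2 * m) : ℚ) :=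
  stmt_3_general k n hk
end

section
/- For every integer k ≥ 1 and every positive integer n, T_{2k}(n) = Σ_{m=1}^{k} R(k,m) · C(2n+m, 2m+1). -/
/-- `T k n = 1^k + 3^k + ⋯ + (2n-1)^k`, the sum of the `k`-th powers of the first
`n` odd positive integers. -/
def T (k n : ℕ) : ℕ := ∑ i ∈ Finset.Icc 1 n, (2 * i - 1) ^ k

open Finset

/- ### Elementary binomial coefficient identities over ℤ -/

lemma aux_L1 (n k : ℕ) : ((k:ℤ)+1) * (n.choose (k+1) : ℤ) = ((n:ℤ) - k) * (n.choose k : ℤ) := by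
  rcases le_or_gt k n with h | h
  · have h2 := Nat.choose_succ_right_eq n k
    have h3 : ((n.choose (k+1) * (k+1) : ℕ) : ℤ) = ((n.choose k * (n - k) : ℕ) : ℤ) := by
      exact_mod_cast congrArg (Nat.cast (R := ℤ)) h2
    rw [Nat.cast_mul, Nat.cast_mul, Nat.cast_sub h] at h3
    push_cast at h3 ⊢
    linarith
  · rw [Nat.choose_eq_zero_of_lt h, Nat.choose_eq_zero_of_lt (by omega)]
    simp

lemma aux_L2 (n k : ℕ) : ((n:ℤ)+1) * (n.choose k : ℤ) = ((n:ℤ)+1-k) * ((n+1).choose k : ℤ) := by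
  have h1 := Nat.add_one_mul_choose_eq n k
  have h1' : ((n:ℤ)+1) * (n.choose k : ℤ) = ((n+1).choose (k+1) : ℤ) * ((k:ℤ)+1) := by
    exact_mod_cast congrArg (Nat.cast (R := ℤ)) h1
  have h2 := aux_L1 (n+1) k
  push_cast at h2
  linarith [h1', h2]

/-- `pfun m t = C(t+m, 2m) + C(t+1+m, 2m)` as an integer; this is
`2(t+1)^2 ((t+1)^2-1)((t+1)^2-4)⋯((t+1)^2-(m-1)^2)/(2m)!`. -/
def pfun (m t : ℕ) : ℤ := ((t+m).choose (2*m) : ℤ) + ((t+1+m).choose (2*m) : ℤ)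

/-- The three-term recurrence for the `pfun` basis under multiplication by `(t+1)^2`. -/
lemma aux_lemP (s t : ℕ) :
    ((t:ℤ)+1)^2 * pfun (s+1) t
      = (2*(s:ℤ)+4)*(2*(s:ℤ)+3) * pfun (s+2) t + ((s:ℤ)+1)^2 * pfun (s+1) t := by
  have e4a := aux_L1 (t+s+3) (2*s+3)
  have e4b := aux_L1 (t+s+3) (2*s+2)
  have e5a := aux_L1 (t+s+2) (2*s+3)
  have e5b := aux_L1 (t+s+2) (2*s+2)
  have e1 : ((t+s+3).choose (2*s+2) : ℤ)
      = ((t+s+2).choose (2*s+2) : ℤ) + ((t+s+2).choose (2*s+1) : ℤ) := by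
    have h := Nat.choose_succ_succ (t+s+2) (2*s+1)
    push_cast [h]
    ring
  have e2 := aux_L1 (t+s+2) (2*s+1)
  have e3 := aux_L2 (t+s+1) (2*s+2)
  simp only [pfun]
  push_cast at *
  ring_nf at e4a e4b e5a e5b e1 e2 e3 ⊢
  linear_combination (norm := ring_nf) (-(2*(s:ℤ)+3))*e4a - (((t:ℤ)-s)*e4b)
    - (2*(s:ℤ)+3)*e5a - (((t:ℤ)-s-1)*e5b)
    - (((t:ℤ)-s)*((t:ℤ)-s+1)*e1) + (((t:ℤ)-s)*e2) + (((t:ℤ)-s)*e3)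

/- ### Properties of `R` -/

lemma aux_R_zero (k : ℕ) (hk : 1 ≤ k) : R k 0 = 0 := by
  have h : (0:ℕ)^(2*k) = 0 := Nat.zero_pow (by omega)
  simp [R, h]

/-- key ℕ identity: `(j+1)(2s+1-j) C(2s+2, j+1) = (2s+2)(2s+1) C(2s, j)` -/
lemma aux_N1 (s j : ℕ) :
    (j+1) * ((2*s+1) - j) * ((2*s+2).choose (j+1)) = (2*s+2) * (2*s+1) * ((2*s).choose j) := by
  have h1 : (2*s+1) * (2*s).choose j = (2*s+1).choose (j+1) * (j+1) :=
    Nat.add_one_mul_choose_eq (2*s) j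
  have h2 : (2*s+1).choose (j+1) * (j+1) = (2*s+1).choose j * (2*s+1-j) :=
    Nat.choose_succ_right_eq (2*s+1) j
  have h4 : (2*s+2) * ((2*s+1).choose j) = (2*s+2).choose (j+1) * (j+1) :=
    Nat.add_one_mul_choose_eq (2*s+1) j
  have h5 : (2*s+1).choose j * (2*s+1-j) = (2*s+1) * ((2*s).choose j) := by
    rw [← h2, ← h1]
  calc (j+1) * ((2*s+1) - j) * ((2*s+2).choose (j+1))
      = ((2*s+2).choose (j+1) * (j+1)) * (2*s+1-j) := by ring
    _ = ((2*s+2) * ((2*s+1).choose j)) * (2*s+1-j) := by rw [h4]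
    _ = (2*s+2) * ((2*s+1).choose j * (2*s+1-j)) := by ring
    _ = (2*s+2) * ((2*s+1) * ((2*s).choose j)) := by rw [h5]
    _ = (2*s+2) * (2*s+1) * ((2*s).choose j) := by ring

/-- The fundamental recurrence `R(k+1, m) = 2m(2m-1) R(k, m-1) + m² R(k, m)`. -/
lemma aux_R_rec (k s : ℕ) :
    R (k+1) (s+1) = (2*(s:ℤ)+2)*(2*(s:ℤ)+1) * R k s + ((s:ℤ)+1)^2 * R k (s+1) := by
  have key : R (k+1) (s+1) - ((s:ℤ)+1)^2 * R k (s+1)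
      = ∑ j ∈ range (s+2), (-1:ℤ)^j * ((2*(s+1)).choose j : ℤ) *
          ((((s+1-j)^(2*(k+1)) : ℕ) : ℤ) - ((s:ℤ)+1)^2 * (((s+1-j)^(2*k) : ℕ) : ℤ)) := by
    simp only [R, Finset.mul_sum, ← Finset.sum_sub_distrib]
    apply Finset.sum_congr rfl
    intro j hj
    ring
  have key2 : ∑ j ∈ range (s+2), (-1:ℤ)^j * ((2*(s+1)).choose j : ℤ) *
          ((((s+1-j)^(2*(k+1)) : ℕ) : ℤ) - ((s:ℤ)+1)^2 * (((s+1-j)^(2*k) : ℕ) : ℤ))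
      = (2*(s:ℤ)+2)*(2*(s:ℤ)+1) * R k s := by
    rw [Finset.sum_range_succ']
    have h0 : (-1:ℤ)^0 * ((2*(s+1)).choose 0 : ℤ) *
        ((((s+1-0)^(2*(k+1)) : ℕ) : ℤ) - ((s:ℤ)+1)^2 * (((s+1-0)^(2*k) : ℕ) : ℤ)) = 0 := by
      have h : (s+1-0)^(2*(k+1)) = (s+1)^2 * (s+1)^(2*k) := by rw [Nat.sub_zero]; ring
      rw [h]
      push_cast
      ring
    rw [h0, add_zero, R, Finset.mul_sum]
    apply Finset.sum_congr rfl
    intro j hj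
    have hjs : j ≤ s := by simpa [Nat.lt_succ_iff] using hj
    have hsub : s + 1 - (j+1) = s - j := by omega
    have hc : ((s-j:ℕ):ℤ) = (s:ℤ) - j := by rw [Nat.cast_sub hjs]
    have hpow : ((s-j)^(2*(k+1)) : ℕ) = (s-j)^(2*k) * ((s-j) * (s-j)) := by ring
    have hch : (2*(s+1)) = 2*s+2 := by ring
    have hNz : ((j:ℤ)+1) * ((2*(s:ℤ)+1) - j) * (((2*s+2).choose (j+1) : ℕ) : ℤ)
        = (2*(s:ℤ)+2) * (2*(s:ℤ)+1) * (((2*s).choose j : ℕ) : ℤ) := by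
      have h := congrArg (Nat.cast (R := ℤ)) (aux_N1 s j)
      push_cast [Nat.cast_sub (by omega : j ≤ 2*s+1)] at h
      linarith
    rw [hsub, hpow, hch]
    push_cast [hc]
    linear_combination ((-1:ℤ))^j * (((s:ℤ)-(j:ℤ))^(2*k)) * hNz
  linarith [key, key2]

/-- partial alternating sum of binomials -/
lemma aux_altsum (N m : ℕ) :
    ∑ j ∈ range (m+1), (-1:ℤ)^j * ((N+1).choose j : ℤ) = (-1)^m * (N.choose m : ℤ) := by
  induction m with
  | zero => simp
  | succ m ih =>
      rw [Finset.sum_range_succ, ih]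
      have h : (N+1).choose (m+1) = N.choose m + N.choose (m+1) := Nat.choose_succ_succ N m
      rw [h]
      push_cast
      ring

lemma aux_R0_eq (m : ℕ) : R 0 (m+1) = (-1)^(m+1) * ((2*m+1).choose (m+1) : ℤ) := by
  have h : ∀ j, ((m+1-j)^(2*0) : ℕ) = 1 := by intro j; simp
  have h2 : 2*(m+1) = (2*m+1)+1 := by ring
  simp only [R, h, Nat.cast_one, mul_one, h2]
  exact aux_altsum (2*m+1) (m+1)

lemma aux_central (s : ℕ) :
    (2*s+4) * (2*s+3) * ((2*s+1).choose (s+1)) = (s+2)*(s+2) * ((2*s+3).choose (s+2)) := by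
  have half : ∀ n : ℕ, 2 * ((2*n+1).choose (n+1)) = Nat.centralBinom (n+1) := by
    intro n
    have hp : (2*n+2).choose (n+1) = (2*n+1).choose n + (2*n+1).choose (n+1) :=
      Nat.choose_succ_succ (2*n+1) n
    have hs : (2*n+1).choose n = (2*n+1).choose (n+1) := by
      have := Nat.choose_symm (show n ≤ 2*n+1 by omega) (n := 2*n+1)
      rw [show 2*n+1-n = n+1 by omega] at this
      omega
    have hcb : Nat.centralBinom (n+1) = (2*(n+1)).choose (n+1) := rfl
    rw [hcb, show 2*(n+1) = 2*n+2 from by ring, hp, hs]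
    ring
  have key := Nat.succ_mul_centralBinom_succ (s+1)
  have h1 := half s
  have h2 := half (s+1)
  rw [show 2*(s+1)+1 = 2*s+3 from by ring, show s+1+1 = s+2 from rfl] at h2
  rw [show 2*(s+1)+1 = 2*s+3 from by ring] at key
  nlinarith [h1, h2, key]

lemma aux_R1_vanish (s : ℕ) : R 1 (s+2) = 0 := by
  have hr := aux_R_rec 0 (s+1)
  have h1 := aux_R0_eq s
  have h2 := aux_R0_eq (s+1)
  have hc : ((2*s+4) * (2*s+3) * ((2*s+1).choose (s+1)) : ℤ)
      = ((s:ℤ)+2)*((s:ℤ)+2) * ((2*s+3).choose (s+2) : ℤ) := by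
    exact_mod_cast congrArg (Nat.cast (R := ℤ)) (aux_central s)
  rw [show (s:ℕ)+1+1 = s+2 from rfl] at hr
  rw [show 2*(s+1)+1 = 2*s+3 from by ring, show (s:ℕ)+1+1 = s+2 from rfl] at h2
  rw [hr, h1, h2]
  push_cast
  ring_nf
  ring_nf at hc
  linear_combination (-((-1:ℤ)^s)) * hc

lemma aux_R_vanish : ∀ k m : ℕ, 1 ≤ k → k < m → R k m = 0 := by
  intro k
  induction k with
  | zero => intro m h; omega
  | succ k ih =>
      intro m hk1 hkm
      obtain ⟨s, rfl⟩ : ∃ s, m = s + 1 := ⟨m - 1, by omega⟩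
      rcases Nat.eq_zero_or_pos k with hk0 | hkpos
      · subst hk0
        obtain ⟨u, rfl⟩ : ∃ u, s = u + 1 := ⟨s - 1, by omega⟩
        exact aux_R1_vanish u
      · rw [aux_R_rec k s, ih s hkpos (by omega), ih (s+1) hkpos (by omega)]
        ring

/- ### The key expansion of `(t+1)^{2k}` in the `pfun` basis -/

lemma aux_pfun_one (t : ℕ) : pfun 1 t = ((t:ℤ)+1)^2 := by
  simp only [pfun]
  have a1 := aux_L1 (t+1) 1
  have a2 := aux_L1 (t+2) 1
  simp only [Nat.choose_one_right] at a1 a2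
  push_cast at a1 a2 ⊢
  ring_nf at a1 a2 ⊢
  linarith

lemma aux_R11 : R 1 1 = 1 := by decide

lemma aux_lemA : ∀ k, 1 ≤ k → ∀ t : ℕ,
    ∑ j ∈ range k, R k (j+1) * pfun (j+1) t = ((t:ℤ)+1)^(2*k) := by
  intro k hk
  induction k, hk using Nat.le_induction with
  | base =>
      intro t
      simp [aux_R11, aux_pfun_one]
  | succ k hk ih =>
      intro t
      have split : ∑ j ∈ range (k+1), R (k+1) (j+1) * pfun (j+1) t
          = (∑ j ∈ range (k+1), ((2*(j:ℤ)+2)*(2*(j:ℤ)+1) * R k j) * pfun (j+1) t)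
            + ∑ j ∈ range (k+1), (((j:ℤ)+1)^2 * R k (j+1)) * pfun (j+1) t := by
        rw [← Finset.sum_add_distrib]
        apply Finset.sum_congr rfl
        intro j hj
        rw [aux_R_rec k j]
        ring
      rw [split]
      have hS1 : ∑ j ∈ range (k+1), ((2*(j:ℤ)+2)*(2*(j:ℤ)+1) * R k j) * pfun (j+1) t
          = ∑ j ∈ range k, ((2*(j:ℤ)+4)*(2*(j:ℤ)+3) * R k (j+1)) * pfun (j+2) t := by
        rw [Finset.sum_range_succ', aux_R_zero k hk]
        simp only [mul_zero, zero_mul, add_zero]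
        apply Finset.sum_congr rfl
        intro j hj
        rw [show (j:ℕ)+1+1 = j+2 from rfl]
        push_cast
        ring
      have hS2 : ∑ j ∈ range (k+1), (((j:ℤ)+1)^2 * R k (j+1)) * pfun (j+1) t
          = ∑ j ∈ range k, (((j:ℤ)+1)^2 * R k (j+1)) * pfun (j+1) t := by
        rw [Finset.sum_range_succ, aux_R_vanish k (k+1) hk (by omega)]
        simp
      rw [hS1, hS2, ← Finset.sum_add_distrib]
      have hcomb : ∑ j ∈ range k,
            (((2*(j:ℤ)+4)*(2*(j:ℤ)+3) * R k (j+1)) * pfun (j+2) t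
              + (((j:ℤ)+1)^2 * R k (j+1)) * pfun (j+1) t)
          = ((t:ℤ)+1)^2 * ∑ j ∈ range k, R k (j+1) * pfun (j+1) t := by
        rw [Finset.mul_sum]
        apply Finset.sum_congr rfl
        intro j hj
        have hp := aux_lemP j t
        linear_combination (-(R k (j+1))) * hp
      rw [hcomb, ih t]
      ring

/- ### The main theorem -/

theorem stmt_7 (k n : ℕ) (hk : 1 ≤ k) (hn : 1 ≤ n) :
    (T (2 * k) n : ℤ) =
      ∑ m ∈ Finset.Icc 1 k, R k m * ((2 * n + m).choose (2 * m + 1) : ℤ) := by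
  have main : ∀ N : ℕ, (T (2*k) N : ℤ)
      = ∑ j ∈ range k, R k (j+1) * ((2*N+(j+1)).choose (2*(j+1)+1) : ℤ) := by
    intro N
    induction N with
    | zero =>
        have hz : ∀ j : ℕ, (j+1).choose (2*(j+1)+1) = 0 := by
          intro j
          apply Nat.choose_eq_zero_of_lt
          omega
        simp [T, hz]
    | succ N ihN =>
        have hT : T (2*k) (N+1) = T (2*k) N + (2*N+1)^(2*k) := by
          rw [T, T, Finset.sum_Icc_succ_top (by omega : 1 ≤ N+1)]
          rw [show 2*(N+1)-1 = 2*N+1 from by omega]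
        have hterm : ∀ j : ℕ, ((2*(N+1)+(j+1)).choose (2*(j+1)+1) : ℤ)
            = ((2*N+(j+1)).choose (2*(j+1)+1) : ℤ) + pfun (j+1) (2*N) := by
          intro j
          have e1 : (2*N+j+3).choose (2*j+3)
              = (2*N+j+2).choose (2*j+2) + (2*N+j+2).choose (2*j+3) :=
            Nat.choose_succ_succ (2*N+j+2) (2*j+2)
          have e2 : (2*N+j+2).choose (2*j+3)
              = (2*N+j+1).choose (2*j+2) + (2*N+j+1).choose (2*j+3) :=
            Nat.choose_succ_succ (2*N+j+1) (2*j+2)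
          rw [show 2*(N+1)+(j+1) = 2*N+j+3 from by omega,
            show 2*(j+1)+1 = 2*j+3 from by omega,
            show 2*N+(j+1) = 2*N+j+1 from by omega]
          rw [pfun, show 2*N+(j+1) = 2*N+j+1 from by omega,
            show 2*N+1+(j+1) = 2*N+j+2 from by omega,
            show 2*(j+1) = 2*j+2 from by omega]
          rw [e1, e2]
          push_cast
          ring
        have hsum : ∑ j ∈ range k, R k (j+1) * ((2*(N+1)+(j+1)).choose (2*(j+1)+1) : ℤ)
            = (∑ j ∈ range k, R k (j+1) * ((2*N+(j+1)).choose (2*(j+1)+1) : ℤ))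
              + ∑ j ∈ range k, R k (j+1) * pfun (j+1) (2*N) := by
          rw [← Finset.sum_add_distrib]
          apply Finset.sum_congr rfl
          intro j hj
          rw [hterm j]
          ring
        have hA := aux_lemA k hk (2*N)
        rw [hsum, hA, ← ihN, hT]
        push_cast
        ring
  rw [main n]
  rw [show Finset.Icc 1 k = Finset.Ico 1 (k+1) from (Finset.Ico_add_one_right_eq_Icc 1 k).symm,
    Finset.sum_Ico_eq_sum_range]
  rw [show k+1-1 = k from by omega]
  apply Finset.sum_congr rfl
  intro j hj
  rw [add_comm 1 j]
end
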